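/- The (k,t)-LRTT relation is not a congruence: over the alphabet {a,b}, ab ≈^t_k ba for all k ≥ 2, t ≥ 1 (in fact ba = (ab)^r), but aba is not ≈^t_k-equivalent to baa for k = 2, t = 1. -/
import Mathlib


inductive AB : Type
  | a | b
deriving DecidableEq

open AB

/-- Number of occurrences of `v` or `v.reverse` in `w`. -/
def occR {A : Type*} [DecidableEq A] (w v : List A) : ℕ :=
  (List.range (w.length + 1)).countP
    (fun i => decide ((w.drop i).take v.length = v ∨ (w.drop i).take v.length = v.reverse))

/-- Equality up to threshold `t`. -/
def thrEq (t i j : ℕ) : Prop := i = j ∨ (t ≤ i ∧ t ≤ j)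

/-- The `(k,t)`-locally-reversible threshold testable equivalence. -/
def LRTT {A : Type*} [DecidableEq A] (k t : ℕ) (w w' : List A) : Prop :=
  (w.length < k ∧ (w' = w ∨ w' = w.reverse)) ∨
  (k ≤ w.length ∧ k ≤ w'.length ∧
    (∀ v : List A, v.length ≤ k → thrEq t (occR w v) (occR w' v)) ∧
    ({w.take (k - 1), (w.drop (w.length - (k - 1))).reverse} : Set (List A)) =
      {w'.take (k - 1), (w'.drop (w'.length - (k - 1))).reverse})

theorem lrtt_not_congruence :
    (∀ k t : ℕ, 2 ≤ k → 1 ≤ t → LRTT k t [a, b] [b, a]) ∧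
    ([b, a] = [a, b].reverse) ∧
    ¬ LRTT 2 1 [a, b, a] [b, a, a] := by
  refine ⟨?_, rfl, ?_⟩
  · intro k t hk ht
    rcases eq_or_lt_of_le hk with h | h
    · subst h
      right
      refine ⟨le_refl _, le_refl _, ?_, ?_⟩
      · intro v hv
        left
        match v, hv with
        | [], _ => decide
        | [x], _ => cases x <;> decide
        | [x, y], _ => cases x <;> cases y <;> decide
      · show ({[a], [b]} : Set (List AB)) = {[b], [a]}
        exact Set.pair_comm _ _
    · left
      exact ⟨h, Or.inr rfl⟩
  · intro hL
    rcases hL with ⟨h1, _⟩ | ⟨_, _, _, hset⟩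
    · simp at h1
    · have h := Set.ext_iff.mp hset [b]
      simp at h
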